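/- arXiv:2505.05179 — 2 statements merged into one kernel-verified Lean document; each statement's English description precedes it below -/
import Mathlib

section
/- Every locally finite tree (connected acyclic simple graph in which every vertex has a finite neighbor set) is H-rigid. -/
open SimpleGraph

/-- The link of a set `S` of vertices: all vertices adjacent to every vertex of `S`.
(For `S = ∅` this is all of `V`.) -/
def link {V : Type*} (G : SimpleGraph V) (S : Set V) : Set V :=
  {v : V | ∀ s ∈ S, G.Adj v s}

/-- A nonempty set of vertices is internal if its link is not a clique. -/
def IsInternalSet {V : Type*} (G : SimpleGraph V) (S : Set V) : Prop :=
  S.Nonempty ∧ ¬ G.IsClique (link G S)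

/-- A vertex is internal if its neighborhood is not a clique. -/
def IsInternalVertex {V : Type*} (G : SimpleGraph V) (v : V) : Prop :=
  ¬ G.IsClique (G.neighborSet v)

/-- The induced subgraph on the internal vertices. -/
def intGraph {V : Type*} (G : SimpleGraph V) :
    SimpleGraph ↥{v : V | IsInternalVertex G v} :=
  G.induce {v : V | IsInternalVertex G v}

/-- A graph is H-rigid if it is locally finite, all its internal sets are singletons,
and every nonempty finite set of vertices with nonempty link induces a subgraph all of
whose connected components are complete. -/
def HRigid {V : Type*} (G : SimpleGraph V) : Prop :=
  (∀ v : V, (G.neighborSet v).Finite) ∧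
  (∀ S : Set V, IsInternalSet G S → ∃ v : V, S = {v}) ∧
  (∀ S : Set V, S.Finite → S.Nonempty → (link G S).Nonempty →
    ∀ u w : ↥S, (G.induce S).Reachable u w → u = w ∨ (G.induce S).Adj u w)

/-- The eccentricity of a vertex: the sup of extended graph distances to all vertices. -/
noncomputable def eccentricity {V : Type*} (G : SimpleGraph V) (t : V) : ℕ∞ :=
  ⨆ s : V, G.edist t s

/-- The radius of a graph, valued in `ℕ∞`. -/
noncomputable def graphRadius {V : Type*} (G : SimpleGraph V) : ℕ∞ :=
  ⨅ t : V, eccentricity G t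

/-- The infinite line graph on `ℤ`: `i` and `j` adjacent iff `|i - j| = 1`. -/
def lineZ : SimpleGraph ℤ where
  Adj i j := |i - j| = 1
  symm := ⟨fun i j (h : |i - j| = 1) => show |j - i| = 1 by rwa [abs_sub_comm]⟩
  loopless := ⟨fun i (h : |i - i| = 1) => by simp at h⟩

/-- The cycle graph on `ZMod n`: `i` and `j` adjacent iff `i - j = 1` or `j - i = 1`. -/
def cycleZMod (n : ℕ) : SimpleGraph (ZMod n) :=
  SimpleGraph.circulantGraph ({1} : Set (ZMod n))

/-!
In a forest two distinct vertices `u ≠ w` are joined by at most one path, so a common neighbour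
`v` of them lies on every path from `u` to `w`; in particular they have at most one common
neighbour. Any two vertices of an internal set are common neighbours of two distinct vertices of
its link, hence coincide. And if `v ∈ Link(S)`, then `v ∉ S`, so two distinct vertices of `S`
cannot be joined inside `S`: every induced component is a single vertex.
-/

namespace SimpleGraph.IsAcyclic

variable {V : Type*} {G : SimpleGraph V}

lemma mem_support_of_adj_of_adj (hG : G.IsAcyclic) {u v w : V} (huw : u ≠ w)
    (huv : G.Adj u v) (hvw : G.Adj v w) {p : G.Walk u w} (hp : p.IsPath) : v ∈ p.support := by
  have hq : (Walk.cons huv (Walk.cons hvw Walk.nil)).IsPath := by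
    simp [huv.ne, hvw.ne, huw]
  rw [Subtype.mk.inj <| (hG.subsingleton_path u w).elim ⟨p, hp⟩ ⟨_, hq⟩]
  simp

lemma subsingleton_commonNeighbors (hG : G.IsAcyclic) {u w : V} (huw : u ≠ w) :
    (G.commonNeighbors u w).Subsingleton := by
  rintro s ⟨hus : G.Adj u s, hws : G.Adj w s⟩ t ⟨hut : G.Adj u t, hwt : G.Adj w t⟩
  have hpath : (Walk.cons hut (Walk.cons hwt.symm Walk.nil)).IsPath := by
    simp [hut.ne, hwt.ne', huw]
  have hs := hG.mem_support_of_adj_of_adj huw hus hws.symm hpath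
  simpa [hus.ne', hws.ne'] using hs

lemma exists_eq_singleton_of_isInternalSet (hG : G.IsAcyclic) {S : Set V}
    (hS : IsInternalSet G S) : ∃ v, S = {v} := by
  obtain ⟨⟨s, hs⟩, hlink⟩ := hS
  obtain ⟨u, hu, w, hw, huw, -⟩ : ∃ u ∈ link G S, ∃ w ∈ link G S, u ≠ w ∧ ¬G.Adj u w := by
    simpa [isClique_iff, Set.Pairwise] using hlink
  refine ⟨s, Set.eq_singleton_iff_unique_mem.mpr ⟨hs, fun t ht => ?_⟩⟩
  exact hG.subsingleton_commonNeighbors huw ⟨hu t ht, hw t ht⟩ ⟨hu s hs, hw s hs⟩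

lemma eq_of_reachable_induce_of_mem_link (hG : G.IsAcyclic) {S : Set V} {v : V}
    (hv : v ∈ link G S) {u w : S} (h : (G.induce S).Reachable u w) : u = w := by
  by_contra huw
  obtain ⟨p, hp⟩ := h.exists_isPath
  have hmem := hG.mem_support_of_adj_of_adj (Subtype.coe_ne_coe.mpr huw) (hv u u.2).symm
    (hv w w.2) (hp.map (f := (Embedding.induce S).toHom) Subtype.val_injective)
  obtain ⟨x, -, rfl⟩ := List.mem_map.mp (Walk.support_map _ _ ▸ hmem)
  exact G.loopless.irrefl _ (hv x x.2)

end SimpleGraph.IsAcyclic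

/-- Every locally finite tree is H-rigid. -/
theorem stmt5 {V : Type*} (G : SimpleGraph V) (htree : G.IsTree)
    (hlf : ∀ v : V, (G.neighborSet v).Finite) : HRigid G :=
  ⟨hlf, fun _ hS => htree.isAcyclic.exists_eq_singleton_of_isInternalSet hS,
    fun _ _ _ ⟨_, hv⟩ _ _ h => Or.inl (htree.isAcyclic.eq_of_reachable_induce_of_mem_link hv h)⟩
end

section
/- Let Γ be a simple graph and let u and w be internal vertices of Γ. Then the extended graph distance between u and w computed in the induced subgraph Int(Γ) on the internal vertices equals their extended graph distance computed in Γ (both valued in ℕ∞). -/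
open SimpleGraph

/-! An inner vertex `a` of a shortest path `u - a - b - ⋯` is internal: `u` and `b` are distinct
and non-adjacent, since otherwise the path could be shortened. So a shortest path of `Γ` between
internal vertices runs inside `Int(Γ)`; conversely, distances in an induced subgraph can only be
larger. -/

namespace SimpleGraph

variable {V W : Type*} {G : SimpleGraph V} {H : SimpleGraph W}

lemma Hom.edist_map_le (f : G →g H) (u v : V) : H.edist (f u) (f v) ≤ G.edist u v := by
  obtain h | h := eq_or_ne (G.edist u v) ⊤
  · simp [h]
  obtain ⟨p, hp⟩ := exists_walk_of_edist_ne_top h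
  rw [← hp, ← p.length_map f]
  exact edist_le _

namespace Walk

lemma length_induce {s : Set V} {u v : V} (p : G.Walk u v) (hp : ∀ x ∈ p.support, x ∈ s) :
    (p.induce s hp).length = p.length := by
  rw [← length_map (Embedding.induce s).toHom, map_induce]
  rfl

lemma length_eq_dist_of_cons {u v w : V} {h : G.Adj u v} {p : G.Walk v w}
    (hp : (p.cons h).length = G.dist u w) : p.length = G.dist v w :=
  length_eq_dist_of_subwalk hp (isSubwalk_cons p h)

lemma isInternalVertex_of_length_eq_dist {u a b w : V} (ha : G.Adj u a) (hb : G.Adj a b)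
    (p : G.Walk b w) (hp : ((p.cons hb).cons ha).length = G.dist u w) :
    IsInternalVertex G a := by
  have hlen : p.length + 2 = G.dist u w := by simpa using hp
  intro hclique
  by_cases hub : u = b
  · subst hub
    have := dist_le p
    omega
  · have := dist_le (p.cons (hclique ha.symm hb hub))
    simp only [length_cons] at this
    omega

lemma isInternalVertex_of_mem_support_of_length_eq_dist {u w : V} (hu : IsInternalVertex G u)
    (hw : IsInternalVertex G w) :
    ∀ (p : G.Walk u w), p.length = G.dist u w → ∀ x ∈ p.support, IsInternalVertex G x
  | nil, _, x, hx => by rwa [List.mem_singleton.mp hx]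
  | cons (v := v) h p, hp, x, hx => by
    rw [support_cons, List.mem_cons] at hx
    obtain rfl | hx := hx
    · exact hu
    have hv : IsInternalVertex G v := by
      cases p with
      | nil => exact hw
      | cons hb q => exact isInternalVertex_of_length_eq_dist h hb q hp
    exact isInternalVertex_of_mem_support_of_length_eq_dist hv hw p
      (length_eq_dist_of_cons hp) x hx

end Walk

end SimpleGraph

/-- For internal vertices `u, w`, the extended distance computed in the
internal graph equals the extended distance computed in the whole graph. -/
theorem stmt19 {V : Type*} (G : SimpleGraph V) (u w : V)
    (hu : IsInternalVertex G u) (hw : IsInternalVertex G w) :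
    (intGraph G).edist ⟨u, hu⟩ ⟨w, hw⟩ = G.edist u w := by
  refine le_antisymm ?_ ((Embedding.induce _).toHom.edist_map_le ⟨u, hu⟩ ⟨w, hw⟩)
  by_cases hr : G.Reachable u w
  · obtain ⟨p, hp⟩ := hr.exists_walk_length_eq_dist
    have hint := Walk.isInternalVertex_of_mem_support_of_length_eq_dist hu hw p hp
    calc (intGraph G).edist ⟨u, hu⟩ ⟨w, hw⟩
        ≤ (p.induce {v | IsInternalVertex G v} hint).length := edist_le _
      _ = G.edist u w := by rw [Walk.length_induce, hp, hr.coe_dist_eq_edist]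
  · simp [edist_eq_top_of_not_reachable hr]
end
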